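/- Energy equality for one step of the partitioned ensemble scheme: In the abstract discrete MHD setting, fix a realization index j, a step n, and suppose the velocity equation and potential equation of the scheme hold at step n. Then, writing u = u_jⁿ, u⁺ = u_j^{n+1}, φ = φ_jⁿ, φ⁺ = φ_j^{n+1}, ū = ūⁿ, the exact equality holds: (1/(2N))(‖u⁺‖² − ‖u‖² + ‖u⁺ − u‖²) + (Δt/N)·b(u − ū, u, u⁺) + (Δt/M²)·‖D_V u⁺‖² + (Δt/2)(‖T u⁺‖² − ‖T u‖²) + (Δt/2)(‖D_S φ⁺‖² − ‖D_S φ‖²) + (Δt/2)(‖−D_S φ + T u⁺‖² + ‖−D_S φ⁺ + T u‖²) = Δt·f_j^{n+1}(u⁺). -/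
import Mathlib


open scoped RealInnerProductSpace


private lemma energy_helper (M N Δt p q r B D tt ss at1 a1t aa a1a1 F : ℝ)
    (hM : M ≠ 0) (hN : N ≠ 0) (hΔt : Δt ≠ 0)
    (h1 : (1/(N*Δt))*(p - r) + (1/N)*B + (1/M^2)*D + (tt - at1) = F)
    (h2 : -a1a1 + a1t = 0) :
    (1/(2*N))*(p - q + (p - 2*r + q)) + (Δt/N)*B + (Δt/M^2)*D
    + (Δt/2)*(tt - ss) + (Δt/2)*(a1a1 - aa)
    + (Δt/2)*((aa - 2*at1 + tt) + (a1a1 - 2*a1t + ss)) = Δt*F := by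
  have ha : a1t = a1a1 := by linarith
  subst ha
  rw [← h1]
  field_simp
  ring

/-- Energy equality for one step of the partitioned ensemble scheme
(equation (3.6) of the paper), in the abstract discrete MHD setting. -/
theorem one_step_energy_equality
    {H G : Type*} [NormedAddCommGroup H] [InnerProductSpace ℝ H]
    [NormedAddCommGroup G] [InnerProductSpace ℝ G]
    (V : Submodule ℝ H)
    {S : Type*} [AddCommGroup S] [Module ℝ S]
    (DV : V →ₗ[ℝ] G) (DS : S →ₗ[ℝ] H) (T : H →ₗ[ℝ] H)
    (b : V →ₗ[ℝ] V →ₗ[ℝ] V →ₗ[ℝ] ℝ)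
    (hskew : ∀ u v w : V, b u v w = - b u w v)
    (M N Δt : ℝ) (hM : 0 < M) (hN : 0 < N) (hΔt : 0 < Δt)
    (J : ℕ) (u : Fin J → ℕ → V) (φ : Fin J → ℕ → S)
    (f : Fin J → ℕ → V →ₗ[ℝ] ℝ)
    (ubar : ℕ → V) (hubar : ∀ n, ubar n = (J : ℝ)⁻¹ • ∑ i, u i n)
    (j : Fin J) (n : ℕ)
    -- velocity equation of the scheme at step n for realization j
    (hvel : ∀ v : V,
      (1 / (N * Δt)) * ⟪((u j (n + 1) - u j n : V) : H), (v : H)⟫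
      + (1 / N) * b (ubar n) (u j (n + 1)) v
      + (1 / N) * b (u j n - ubar n) (u j n) v
      + (1 / M ^ 2) * ⟪DV (u j (n + 1)), DV v⟫
      + ⟪-DS (φ j n) + T (u j (n + 1) : H), T (v : H)⟫ = f j (n + 1) v)
    -- potential equation of the scheme at step n for realization j
    (hpot : ∀ ψ : S, ⟪-DS (φ j (n + 1)) + T (u j n : H), DS ψ⟫ = 0) :
    (1 / (2 * N)) * (‖(u j (n + 1) : H)‖ ^ 2 - ‖(u j n : H)‖ ^ 2
        + ‖((u j (n + 1) - u j n : V) : H)‖ ^ 2)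
    + (Δt / N) * b (u j n - ubar n) (u j n) (u j (n + 1))
    + (Δt / M ^ 2) * ‖DV (u j (n + 1))‖ ^ 2
    + (Δt / 2) * (‖T (u j (n + 1) : H)‖ ^ 2 - ‖T (u j n : H)‖ ^ 2)
    + (Δt / 2) * (‖DS (φ j (n + 1))‖ ^ 2 - ‖DS (φ j n)‖ ^ 2)
    + (Δt / 2) * (‖-DS (φ j n) + T (u j (n + 1) : H)‖ ^ 2
        + ‖-DS (φ j (n + 1)) + T (u j n : H)‖ ^ 2)
    = Δt * f j (n + 1) (u j (n + 1)) := by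

  have hb0 : b (ubar n) (u j (n+1)) (u j (n+1)) = 0 := by
    have := hskew (ubar n) (u j (n+1)) (u j (n+1)); linarith
  have h1 := hvel (u j (n+1))
  have h2 := hpot (φ j (n+1))
  rw [hb0] at h1
  have hc1 : ⟪((u j (n+1) : V) : H), ((u j n : V) : H)⟫ = ⟪((u j n : V) : H), ((u j (n+1) : V) : H)⟫ := real_inner_comm _ _
  have hc2 : ⟪T ((u j (n+1) : V) : H), DS (φ j n)⟫ = ⟪DS (φ j n), T ((u j (n+1) : V) : H)⟫ := real_inner_comm _ _
  have hc3 : ⟪T ((u j n : V) : H), DS (φ j (n+1))⟫ = ⟪DS (φ j (n+1)), T ((u j n : V) : H)⟫ := real_inner_comm _ _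
  simp only [← real_inner_self_eq_norm_sq, Submodule.coe_sub, inner_sub_left, inner_sub_right,
    inner_add_left, inner_add_right, inner_neg_left, inner_neg_right, mul_zero, add_zero] at h1 h2 ⊢
  have key := energy_helper M N Δt
    (⟪((u j (n+1) : V) : H), ((u j (n+1) : V) : H)⟫)
    (⟪((u j n : V) : H), ((u j n : V) : H)⟫)
    (⟪((u j n : V) : H), ((u j (n+1) : V) : H)⟫)
    (b (u j n - ubar n) (u j n) (u j (n+1)))
    (⟪DV (u j (n+1)), DV (u j (n+1))⟫)
    (⟪T ((u j (n+1) : V) : H), T ((u j (n+1) : V) : H)⟫)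
    (⟪T ((u j n : V) : H), T ((u j n : V) : H)⟫)
    (⟪DS (φ j n), T ((u j (n+1) : V) : H)⟫)
    (⟪DS (φ j (n+1)), T ((u j n : V) : H)⟫)
    (⟪DS (φ j n), DS (φ j n)⟫)
    (⟪DS (φ j (n+1)), DS (φ j (n+1))⟫)
    (f j (n+1) (u j (n+1)))
    hM.ne' hN.ne' hΔt.ne'
    (by linear_combination h1)
    (by linear_combination h2 - hc3)
  linear_combination key - (1/(2*N)) * hc1 - (Δt/2) * hc2 - (Δt/2) * hc3
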